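/- arXiv:1705.03492 — 2 statements merged into one kernel-verified Lean document; each statement's English description precedes it below -/
import Mathlib

section
/- Let A be a primitive axial algebra of Jordan type η over a field F with char F ≠ 2, and let a, b be distinct η-axes in A. Then the subalgebra N_{a,b} generated by a and b is 3-dimensional precisely when ab ≠ 0 and there exist a nonzero element σ ∈ N_{a,b} and a scalar φ ∈ F such that, setting π = (1−η)φ − η, one has ab = σ + ηa + ηb and σv = πv for each v ∈ {a, b, σ}. Furthermore, when N_{a,b} is 3-dimensional, it has an identity element if and only if π ≠ 0, in which case the identity of N_{a,b} is (1/π)σ. -/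
/-!
Write `b = φ a + b₀ + b_η` along the eigenspaces of `a`, and `σ = ab - ηa - ηb`. Then
`σ = π a - η b₀` with `π = (1 - η) φ - η`, so `σ a = π a`; symmetrically `σ b = π' b` with
`π' = (1 - η) ψ - η`, where `ψ` is the coefficient of `b` in the `b`-decomposition of `a`.
Comparing `a`-components in `σ b = π' b` gives `φ (π - π') = 0` and `η b₀² = -π' b₀`. With the
symmetric identity, `(1 - η) (φ - ψ)² = 0`, so `π = π'` and `σ² = π σ`.

Hence `N_{a,b}` is always spanned by `a, b, σ`, and it is 3-dimensional iff `σ ∉ span {a, b}`.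
This fails if `ab = 0` or `σ = 0`; conversely, if `σ ∈ span {a, b}`, comparing coefficients in
`σ a = π a` and `σ b = π b` forces `σ = 0`, `ab = 0` or `η² = η`. As `σ` acts on `N_{a,b}` as
the scalar `π`, `π⁻¹ σ` is its identity when `π ≠ 0`, and for `π = 0` an identity `e` would give
`σ = e σ = π e = 0`.
-/

universe u v

section Prelim

variable (F : Type u) {A : Type v} [Field F] [NonUnitalNonAssocCommRing A]
  [Module F A] [SMulCommClass F A A] [IsScalarTower F A A]

/-- The λ-eigenspace of the adjoint map `ad_a : x ↦ a * x`. -/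
def eigSp (a : A) (l : F) : Submodule F A where
  carrier := {x | a * x = l • x}
  add_mem' := by
    intro x y hx hy
    simp only [Set.mem_setOf_eq] at *
    rw [mul_add, hx, hy, smul_add]
  zero_mem' := by simp
  smul_mem' := by
    intro c x hx
    simp only [Set.mem_setOf_eq] at *
    rw [mul_smul_comm, hx, smul_smul, smul_smul, mul_comm]

/-- `a` is a (primitive) `η`-axis. -/
structure IsAxis (η : F) (a : A) : Prop where
  ne_zero : a ≠ 0
  idem : a * a = a
  decomp : eigSp F a 1 ⊔ eigSp F a 0 ⊔ eigSp F a η = ⊤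
  prim : eigSp F a 1 = Submodule.span F {a}
  f11 : ∀ x ∈ eigSp F a 1, ∀ y ∈ eigSp F a 1, x * y ∈ eigSp F a 1
  f00 : ∀ x ∈ eigSp F a 0, ∀ y ∈ eigSp F a 0, x * y ∈ eigSp F a 0
  f10 : ∀ x ∈ eigSp F a 1, ∀ y ∈ eigSp F a 0, x * y = 0
  fpe : ∀ x ∈ eigSp F a 1 ⊔ eigSp F a 0, ∀ y ∈ eigSp F a η, x * y ∈ eigSp F a η
  fee : ∀ x ∈ eigSp F a η, ∀ y ∈ eigSp F a η, x * y ∈ eigSp F a 1 ⊔ eigSp F a 0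

/-- `τ` is the Miyamoto involution of the `η`-axis `a`. -/
structure IsMiyamoto (η : F) (a : A) (τ : A → A) : Prop where
  fixes : ∀ x ∈ eigSp F a 1 ⊔ eigSp F a 0, τ x = x
  negates : ∀ x ∈ eigSp F a η, τ x = -x
  map_add : ∀ x y : A, τ (x + y) = τ x + τ y
  map_smul : ∀ (c : F) (x : A), τ (c • x) = c • τ x
  map_mul : ∀ x y : A, τ (x * y) = τ x * τ y
  bijective : Function.Bijective τ

/-- `c = φ_a(u)`, the projection of `u` to `F·a` w.r.t. the axis `a`. -/
def IsProjCoeff (η : F) (a u : A) (c : F) : Prop :=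
  ∃ u0 ∈ eigSp F a 0, ∃ ue ∈ eigSp F a η, u = c • a + u0 + ue

/-- `e` is an identity element of the subalgebra `N`. -/
def IsIdentOf (N : NonUnitalSubalgebra F A) (e : A) : Prop :=
  e ∈ N ∧ ∀ z ∈ N, e * z = z

/-- `ψ` is an `F`-algebra automorphism of `A`. -/
structure IsAlgAut (ψ : A → A) : Prop where
  map_add : ∀ x y : A, ψ (x + y) = ψ x + ψ y
  map_smul : ∀ (c : F) (x : A), ψ (c • x) = c • ψ x
  map_mul : ∀ x y : A, ψ (x * y) = ψ x * ψ y
  bijective : Function.Bijective ψ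

/-- The graph `Δ_𝒜`: distinct axes are adjacent iff their product is nonzero. -/
def axesGraph (𝒜 : Set A) : SimpleGraph 𝒜 where
  Adj x y := x ≠ y ∧ (x : A) * (y : A) ≠ 0
  symm := by
    constructor
    rintro x y ⟨hxy, hm⟩
    exact ⟨hxy.symm, by rwa [mul_comm]⟩
  loopless := by constructor; rintro x ⟨h, -⟩; exact h rfl

/-- Multiplication of the Jordan algebra of Clifford type `J(V,B) = F·e ⊕ V`. -/
def cliffMul {V : Type*} [AddCommGroup V] [Module F V]
    (B : V →ₗ[F] V →ₗ[F] F) (x y : F × V) : F × V :=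
  (x.1 * y.1 + B x.2 y.2, x.1 • y.2 + y.1 • x.2)

end Prelim

/-- An isomorphism of `A` with a Jordan algebra of Clifford type `J(V,B)`. -/
structure CliffordTypeIso (F : Type u) (A : Type v) [Field F]
    [NonUnitalNonAssocCommRing A] [Module F A] [SMulCommClass F A A]
    [IsScalarTower F A A] where
  V : Type v
  [instAdd : AddCommGroup V]
  [instMod : Module F V]
  B : V →ₗ[F] V →ₗ[F] F
  symm : ∀ v w : V, B v w = B w v
  iso : A ≃ₗ[F] F × V
  mul_compat : ∀ x y : A, iso (x * y) = cliffMul F B (iso x) (iso y)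

section

variable {F : Type u} {A : Type v} [Field F] [NonUnitalNonAssocCommRing A] [Module F A]

def axialSigma (η : F) (a b : A) : A := a * b - η • a - η • b

theorem axialSigma_comm (η : F) (a b : A) : axialSigma η a b = axialSigma η b a := by
  unfold axialSigma
  rw [mul_comm]
  abel

section

variable [IsScalarTower F A A]

theorem isIdentOf_inv_smul {N : NonUnitalSubalgebra F A} {σ : A} {π : F} (hσN : σ ∈ N)
    (hσ : ∀ z ∈ N, σ * z = π • z) (hπ : π ≠ 0) : IsIdentOf F N (π⁻¹ • σ) :=
  ⟨SMulMemClass.smul_mem _ hσN, fun z hz => by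
    rw [smul_mul_assoc, hσ z hz, smul_smul, inv_mul_cancel₀ hπ, one_smul]⟩

theorem exists_isIdentOf_iff {N : NonUnitalSubalgebra F A} {σ : A} {π : F} (hσN : σ ∈ N)
    (hσ0 : σ ≠ 0) (hσ : ∀ z ∈ N, σ * z = π • z) :
    (∃ e, IsIdentOf F N e) ↔ π ≠ 0 := by
  refine ⟨?_, fun hπ => ⟨_, isIdentOf_inv_smul hσN hσ hπ⟩⟩
  rintro ⟨e, heN, he⟩ hπ
  apply hσ0
  rw [← he σ hσN, mul_comm, hσ e heN, hπ, zero_smul]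

theorem notMem_span_pair_of_mul_eq_smul {η π : F} (hη0 : η ≠ 0) (hη1 : η ≠ 1) {a b σ : A}
    (ha : IsIdempotentElem a) (hb : IsIdempotentElem b) (hind : LinearIndependent F ![a, b])
    (hab : a * b ≠ 0) (hσ0 : σ ≠ 0) (hσ : a * b = σ + η • a + η • b)
    (hσa : σ * a = π • a) (hσb : σ * b = π • b) : σ ∉ Submodule.span F {a, b} := by
  intro hmem
  obtain ⟨α, β, rfl⟩ := Submodule.mem_span_pair.mp hmem
  have hab' : a * b = (α + η) • a + (β + η) • b := by rw [hσ]; module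
  have hba' : b * a = (α + η) • a + (β + η) • b := by rw [mul_comm, hab']
  have e1 : (α + β * (α + η) - π) • a + (β * (β + η)) • b = 0 := by
    simp only [add_mul, smul_mul_assoc, ha.eq, hba'] at hσa
    linear_combination (norm := module) hσa
  have e2 : (α * (α + η)) • a + (β + α * (β + η) - π) • b = 0 := by
    simp only [add_mul, smul_mul_assoc, hb.eq, hab'] at hσb
    linear_combination (norm := module) hσb
  obtain ⟨c1, c2⟩ := LinearIndependent.pair_iff.mp hind _ _ e1
  obtain ⟨c3, c4⟩ := LinearIndependent.pair_iff.mp hind _ _ e2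
  have hηη : η * (η - 1) ≠ 0 := mul_ne_zero hη0 (sub_ne_zero.mpr hη1)
  rcases mul_eq_zero.mp c3 with hα | hα <;> rcases mul_eq_zero.mp c2 with hβ | hβ
  · exact hσ0 (by rw [hα, hβ, zero_smul, zero_smul, add_zero])
  · exact hηη (by linear_combination c4 - c1 + (η - 1) * hβ - (η - 1) * hα)
  · exact hηη (by linear_combination c1 - c4 + (η - 1) * hα - (η - 1) * hβ)
  · exact hab (by rw [hab', hα, hβ, zero_smul, zero_smul, add_zero])

end

variable [SMulCommClass F A A]

theorem mem_eigSp {a x : A} {l : F} : x ∈ eigSp F a l ↔ a * x = l • x := Iff.rfl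

namespace IsAxis

variable {η : F} {a b : A}

theorem exists_isProjCoeff (ha : IsAxis F η a) (x : A) : ∃ c : F, IsProjCoeff F η a x c := by
  have hx : x ∈ eigSp F a 1 ⊔ eigSp F a 0 ⊔ eigSp F a η := ha.decomp ▸ Submodule.mem_top
  obtain ⟨y, hy, xe, hxe, rfl⟩ := Submodule.mem_sup.mp hx
  obtain ⟨u, hu, x0, hx0, rfl⟩ := Submodule.mem_sup.mp hy
  rw [ha.prim, Submodule.mem_span_singleton] at hu
  obtain ⟨c, rfl⟩ := hu
  exact ⟨c, x0, hx0, xe, hxe, rfl⟩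

theorem eq_zero_of_add_add_eq_zero (ha : IsAxis F η a) (hη0 : η ≠ 0) (hη1 : η ≠ 1)
    {c : F} {x0 xe : A} (hx0 : x0 ∈ eigSp F a 0) (hxe : xe ∈ eigSp F a η)
    (h : c • a + x0 + xe = 0) : c = 0 ∧ x0 = 0 ∧ xe = 0 := by
  rw [mem_eigSp, zero_smul] at hx0
  rw [mem_eigSp] at hxe
  -- multiplying by `a` once and twice separates the three components
  have h1 : c • a + η • xe = 0 := by
    simpa [mul_add, mul_smul_comm, ha.idem, hx0, hxe] using congrArg (a * ·) h
  have h2 : c • a + (η * η) • xe = 0 := by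
    simpa [mul_add, mul_smul_comm, ha.idem, hxe, smul_smul] using congrArg (a * ·) h1
  have hxe0 : xe = 0 := by
    have h3 : (η * (η - 1)) • xe = 0 := by
      linear_combination (norm := module) h2 - h1
    exact (smul_eq_zero.mp h3).resolve_left
      (mul_ne_zero hη0 (sub_ne_zero.mpr hη1))
  rw [hxe0, smul_zero, add_zero] at h1
  have hc : c = 0 := (smul_eq_zero.mp h1).resolve_right ha.ne_zero
  refine ⟨hc, ?_, hxe0⟩
  rwa [hc, hxe0, zero_smul, zero_add, add_zero] at h

theorem eq_of_add_add_eq (ha : IsAxis F η a) (hη0 : η ≠ 0) (hη1 : η ≠ 1)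
    {c c' : F} {x0 x0' xe xe' : A}
    (hx0 : x0 ∈ eigSp F a 0) (hx0' : x0' ∈ eigSp F a 0)
    (hxe : xe ∈ eigSp F a η) (hxe' : xe' ∈ eigSp F a η)
    (h : c • a + x0 + xe = c' • a + x0' + xe') :
    c = c' ∧ x0 = x0' ∧ xe = xe' := by
  have hz : (c - c') • a + (x0 - x0') + (xe - xe') = 0 := by
    linear_combination (norm := module) h
  simpa only [sub_eq_zero] using
    ha.eq_zero_of_add_add_eq_zero hη0 hη1 (sub_mem hx0 hx0') (sub_mem hxe hxe') hz

theorem axialSigma_eq (ha : IsAxis F η a) {φ : F} {b0 be : A}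
    (hb0 : b0 ∈ eigSp F a 0) (hbe : be ∈ eigSp F a η) (hb : b = φ • a + b0 + be) :
    axialSigma η a b = ((1 - η) * φ - η) • a - η • b0 := by
  rw [mem_eigSp, zero_smul] at hb0
  rw [mem_eigSp] at hbe
  rw [axialSigma, hb, mul_add, mul_add, mul_smul_comm, ha.idem, hb0, hbe]
  module

end IsAxis

variable [IsScalarTower F A A]

namespace IsAxis

variable {η : F} {a b : A}

theorem axialSigma_mul_left (ha : IsAxis F η a) {φ : F} (hφ : IsProjCoeff F η a b φ) :
    axialSigma η a b * a = ((1 - η) * φ - η) • a := by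
  obtain ⟨b0, hb0, be, hbe, hb⟩ := hφ
  rw [ha.axialSigma_eq hb0 hbe hb, sub_mul, smul_mul_assoc, smul_mul_assoc, ha.idem,
    mul_comm b0 a, mem_eigSp.mp hb0, zero_smul, smul_zero, sub_zero]

/-- Compare the `a`-decompositions of both sides of `σ b = π' b`, using `σ = π a - η b₀`. -/
theorem eqs_of_axialSigma_mul_eq_smul (ha : IsAxis F η a) (hη0 : η ≠ 0) (hη1 : η ≠ 1)
    {φ π' : F} {b0 be : A} (hb0 : b0 ∈ eigSp F a 0) (hbe : be ∈ eigSp F a η)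
    (hb : b = φ • a + b0 + be) (hσb : axialSigma η a b * b = π' • b) :
    φ * ((1 - η) * φ - η) = φ * π' ∧ (-η) • (b0 * b0) = π' • b0 := by
  have hab0 : a * b0 = 0 := by rw [mem_eigSp.mp hb0, zero_smul]
  have habe : a * be = η • be := hbe
  have hexpand : axialSigma η a b * b = (φ * ((1 - η) * φ - η)) • a + (-η) • (b0 * b0)
      + ((((1 - η) * φ - η) * η) • be - η • (b0 * be)) := by
    rw [ha.axialSigma_eq hb0 hbe hb, hb]
    simp only [sub_mul, mul_add, smul_mul_assoc, mul_smul_comm, ha.idem, hab0, habe,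
      mul_comm b0 a, smul_zero, smul_smul]
    module
  have hscaled : π' • b = (φ * π') • a + π' • b0 + π' • be := by
    rw [hb]; module
  rw [hexpand, hscaled] at hσb
  obtain ⟨hcoeff, hzero, -⟩ := ha.eq_of_add_add_eq hη0 hη1
    (Submodule.smul_mem _ _ (ha.f00 b0 hb0 b0 hb0)) (Submodule.smul_mem _ _ hb0)
    (sub_mem (Submodule.smul_mem _ _ hbe)
      (Submodule.smul_mem _ _ (ha.fpe b0 (Submodule.mem_sup_right hb0) be hbe)))
    (Submodule.smul_mem _ _ hbe) hσb
  exact ⟨by rw [hcoeff, mul_comm], hzero⟩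

theorem projCoeff_eq (ha : IsAxis F η a) (hb : IsAxis F η b) (hη0 : η ≠ 0) (hη1 : η ≠ 1)
    {φ ψ : F} (hφ : IsProjCoeff F η a b φ) (hψ : IsProjCoeff F η b a ψ) : φ = ψ := by
  have hσb := hb.axialSigma_mul_left hψ
  have hσa := ha.axialSigma_mul_left hφ
  rw [axialSigma_comm] at hσb hσa
  obtain ⟨b0, hb0, be, hbe, hdb⟩ := hφ
  obtain ⟨a0, ha0, ae, hae, hda⟩ := hψ
  obtain ⟨hφψ, -⟩ := ha.eqs_of_axialSigma_mul_eq_smul hη0 hη1 hb0 hbe hdb hσb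
  obtain ⟨hψφ, -⟩ := hb.eqs_of_axialSigma_mul_eq_smul hη0 hη1 ha0 hae hda hσa
  have hsq : (1 - η) * ((φ - ψ) * (φ - ψ)) = 0 := by linear_combination hφψ + hψφ
  have h1η : (1 : F) - η ≠ 0 := sub_ne_zero.mpr hη1.symm
  exact sub_eq_zero.mp (mul_self_eq_zero.mp ((mul_eq_zero.mp hsq).resolve_left h1η))

theorem axialSigma_mul_self (ha : IsAxis F η a) (hb : IsAxis F η b) (hη0 : η ≠ 0)
    (hη1 : η ≠ 1) {φ : F} (hφ : IsProjCoeff F η a b φ) :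
    axialSigma η a b * axialSigma η a b = ((1 - η) * φ - η) • axialSigma η a b := by
  obtain ⟨ψ, hψ⟩ := hb.exists_isProjCoeff a
  have hσb := hb.axialSigma_mul_left hψ
  rw [axialSigma_comm, ← ha.projCoeff_eq hb hη0 hη1 hφ hψ] at hσb
  obtain ⟨b0, hb0, be, hbe, hdb⟩ := hφ
  obtain ⟨-, hb0sq⟩ := ha.eqs_of_axialSigma_mul_eq_smul hη0 hη1 hb0 hbe hdb hσb
  have hab0 : a * b0 = 0 := by rw [mem_eigSp.mp hb0, zero_smul]
  rw [ha.axialSigma_eq hb0 hbe hdb]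
  simp only [sub_mul, mul_sub, smul_mul_assoc, mul_smul_comm, ha.idem, hab0,
    mul_comm b0 a, smul_zero, sub_zero]
  linear_combination (norm := module) (-η) • hb0sq

theorem axialSigma_mul_eq_smul (ha : IsAxis F η a) (hb : IsAxis F η b) (hη0 : η ≠ 0)
    (hη1 : η ≠ 1) {φ : F} (hφ : IsProjCoeff F η a b φ) :
    ∀ v ∈ ({a, b, axialSigma η a b} : Set A),
      axialSigma η a b * v = ((1 - η) * φ - η) • v := by
  rintro v (rfl | rfl | rfl)
  · exact ha.axialSigma_mul_left hφ
  · obtain ⟨ψ, hψ⟩ := hb.exists_isProjCoeff a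
    rw [axialSigma_comm, hb.axialSigma_mul_left hψ, ha.projCoeff_eq hb hη0 hη1 hφ hψ]
  · exact ha.axialSigma_mul_self hb hη0 hη1 hφ

end IsAxis

theorem mul_mem_span_of_forall_mul_mem {s : Set A}
    (hs : ∀ x ∈ s, ∀ y ∈ s, x * y ∈ Submodule.span F s) {x y : A}
    (hx : x ∈ Submodule.span F s) (hy : y ∈ Submodule.span F s) :
    x * y ∈ Submodule.span F s := by
  have hle : Submodule.map₂ (LinearMap.mul F A) (Submodule.span F s) (Submodule.span F s)
      ≤ Submodule.span F s := by
    rw [Submodule.map₂_span_span]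
    exact Submodule.span_le.mpr (Set.image2_subset_iff.mpr hs)
  exact Submodule.map₂_le.mp hle x hx y hy

theorem adjoin_toSubmodule_le_span {s t : Set A} (hts : t ⊆ Submodule.span F s)
    (hs : ∀ x ∈ s, ∀ y ∈ s, x * y ∈ Submodule.span F s) :
    (NonUnitalAlgebra.adjoin F t).toSubmodule ≤ Submodule.span F s :=
  NonUnitalAlgebra.adjoin_le (S := (Submodule.span F s).toNonUnitalSubalgebra
    fun _ _ => mul_mem_span_of_forall_mul_mem hs) hts

theorem finrank_adjoin_pair_le_two {a b : A} (ha : IsIdempotentElem a)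
    (hb : IsIdempotentElem b) (hab : a * b ∈ Submodule.span F {a, b}) :
    Module.finrank F (NonUnitalAlgebra.adjoin F ({a, b} : Set A)).toSubmodule ≤ 2 := by
  have hle : (NonUnitalAlgebra.adjoin F ({a, b} : Set A)).toSubmodule
      ≤ Submodule.span F {a, b} := by
    refine adjoin_toSubmodule_le_span Submodule.subset_span ?_
    have hb' : b * b ∈ Submodule.span F {a, b} := by
      rw [hb.eq]; exact Submodule.subset_span (by simp)
    have ha' : a * a ∈ Submodule.span F {a, b} := by
      rw [ha.eq]; exact Submodule.subset_span (by simp)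
    rintro x (rfl | rfl) y (rfl | rfl)
    exacts [ha', hab, mul_comm x y ▸ hab, hb']
  have hpair : Module.finrank F (Submodule.span F ({a, b} : Set A)) ≤ 2 := by
    have h := finrank_range_le_card (R := F) ![a, b]
    rwa [Matrix.range_cons_cons_empty, Fintype.card_fin] at h
  have := FiniteDimensional.span_of_finite F (Set.toFinite ({a, b} : Set A))
  exact (Submodule.finrank_mono hle).trans hpair

theorem linearIndependent_pair_of_isIdempotentElem {a b : A} (ha : IsIdempotentElem a)
    (hb : IsIdempotentElem b) (ha0 : a ≠ 0) (hb0 : b ≠ 0) (hab : a ≠ b) :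
    LinearIndependent F ![a, b] := by
  refine (LinearIndependent.pair_iff' ha0).mpr fun c hca => ?_
  have hcc : (c * c - c) • a = 0 := by
    have h := hb.eq
    rw [← hca, smul_mul_smul_comm, ha.eq] at h
    rw [sub_smul, h, sub_self]
  have hc : c * (c - 1) = 0 := by
    linear_combination (smul_eq_zero.mp hcc).resolve_right ha0
  rcases mul_eq_zero.mp hc with h | h
  · exact hb0 (by rw [← hca, h, zero_smul])
  · exact hab (by rw [← hca, sub_eq_zero.mp h, one_smul])

theorem axialSigma_mem_adjoin (η : F) (a b : A) :
    axialSigma η a b ∈ NonUnitalAlgebra.adjoin F ({a, b} : Set A) := by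
  have ha : a ∈ NonUnitalAlgebra.adjoin F ({a, b} : Set A) :=
    NonUnitalAlgebra.subset_adjoin F (by simp)
  have hb : b ∈ NonUnitalAlgebra.adjoin F ({a, b} : Set A) :=
    NonUnitalAlgebra.subset_adjoin F (by simp)
  exact sub_mem (sub_mem (mul_mem ha hb) (SMulMemClass.smul_mem η ha))
    (SMulMemClass.smul_mem η hb)

theorem adjoin_pair_toSubmodule_eq_span {η π : F} {a b σ : A} (ha : IsIdempotentElem a)
    (hb : IsIdempotentElem b) (hσ : a * b = σ + η • a + η • b)
    (hσv : ∀ v ∈ ({a, b, σ} : Set A), σ * v = π • v) :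
    (NonUnitalAlgebra.adjoin F ({a, b} : Set A)).toSubmodule = Submodule.span F {a, b, σ} := by
  have hmem : ∀ v ∈ ({a, b, σ} : Set A), v ∈ Submodule.span F {a, b, σ} :=
    fun v hv => Submodule.subset_span hv
  apply le_antisymm
  · refine adjoin_toSubmodule_le_span (fun v hv => hmem v (by aesop)) ?_
    have hmul : ∀ v ∈ ({a, b, σ} : Set A), σ * v ∈ Submodule.span F {a, b, σ} :=
      fun v hv => hσv v hv ▸ Submodule.smul_mem _ π (hmem v hv)
    have hab : a * b ∈ Submodule.span F {a, b, σ} := by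
      rw [hσ]
      exact add_mem (add_mem (hmem σ (by simp)) (Submodule.smul_mem _ _ (hmem a (by simp))))
        (Submodule.smul_mem _ _ (hmem b (by simp)))
    have haa : a * a ∈ Submodule.span F {a, b, σ} := by rw [ha.eq]; exact hmem a (by simp)
    have hbb : b * b ∈ Submodule.span F {a, b, σ} := by rw [hb.eq]; exact hmem b (by simp)
    simp only [Set.mem_insert_iff, Set.mem_singleton_iff, forall_eq_or_imp, forall_eq]
    exact ⟨⟨haa, hab, mul_comm σ a ▸ hmul a (by simp)⟩,
      ⟨mul_comm a b ▸ hab, hbb, mul_comm σ b ▸ hmul b (by simp)⟩,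
      hmul a (by simp), hmul b (by simp), hmul σ (by simp)⟩
  · have hσ' : σ = axialSigma η a b := by rw [axialSigma, hσ]; abel
    rw [Submodule.span_le]
    rintro v (rfl | rfl | rfl)
    · exact NonUnitalAlgebra.subset_adjoin F (by simp)
    · exact NonUnitalAlgebra.subset_adjoin F (by simp)
    · exact hσ' ▸ axialSigma_mem_adjoin η a b

theorem mul_eq_smul_of_mem_adjoin_pair {η π : F} {a b σ : A} (ha : IsIdempotentElem a)
    (hb : IsIdempotentElem b) (hσ : a * b = σ + η • a + η • b)
    (hσv : ∀ v ∈ ({a, b, σ} : Set A), σ * v = π • v) :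
    ∀ z ∈ NonUnitalAlgebra.adjoin F ({a, b} : Set A), σ * z = π • z := fun z hz => by
  rw [← NonUnitalSubalgebra.mem_toSubmodule, adjoin_pair_toSubmodule_eq_span ha hb hσ hσv] at hz
  exact (Submodule.span_le (p := eigSp F σ π)).mpr hσv hz

theorem finrank_adjoin_pair_eq_three {η π : F} (hη0 : η ≠ 0) (hη1 : η ≠ 1) {a b σ : A}
    (ha : IsIdempotentElem a) (hb : IsIdempotentElem b) (ha0 : a ≠ 0) (hb0 : b ≠ 0)
    (hab : a ≠ b) (habne : a * b ≠ 0) (hσ0 : σ ≠ 0) (hσ : a * b = σ + η • a + η • b)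
    (hσv : ∀ v ∈ ({a, b, σ} : Set A), σ * v = π • v) :
    Module.finrank F (NonUnitalAlgebra.adjoin F ({a, b} : Set A)).toSubmodule = 3 := by
  have hind := linearIndependent_pair_of_isIdempotentElem (F := F) ha hb ha0 hb0 hab
  have hli : LinearIndependent F ![σ, a, b] := hind.finCons <| by
    rw [Matrix.range_cons_cons_empty]
    exact notMem_span_pair_of_mul_eq_smul hη0 hη1 ha hb hind habne hσ0 hσ
      (hσv a (by simp)) (hσv b (by simp))
  have h3 := finrank_span_eq_card hli
  rw [Matrix.range_cons, Matrix.range_cons_cons_empty, Set.singleton_union,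
    Set.insert_comm, Set.pair_comm σ b, Fintype.card_fin] at h3
  rw [adjoin_pair_toSubmodule_eq_span ha hb hσ hσv, h3]

end

theorem three_dimensional_two_generated_subalgebras_general
    {F : Type u} {A : Type v} [Field F] [NonUnitalNonAssocCommRing A]
    [Module F A] [SMulCommClass F A A] [IsScalarTower F A A]
    (η : F) (hη0 : η ≠ 0) (hη1 : η ≠ 1)
    (a b : A) (ha : IsAxis F η a) (hb : IsAxis F η b) (hab : a ≠ b) :
    (Module.finrank F ↥((NonUnitalAlgebra.adjoin F ({a, b} : Set A)).toSubmodule) = 3 ↔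
      (a * b ≠ 0 ∧ ∃ σ ∈ NonUnitalAlgebra.adjoin F ({a, b} : Set A), σ ≠ 0 ∧
        ∃ φ : F, a * b = σ + η • a + η • b ∧
          ∀ v ∈ ({a, b, σ} : Set A), σ * v = ((1 - η) * φ - η) • v)) ∧
    (Module.finrank F ↥((NonUnitalAlgebra.adjoin F ({a, b} : Set A)).toSubmodule) = 3 →
      ∀ σ ∈ NonUnitalAlgebra.adjoin F ({a, b} : Set A), σ ≠ 0 →
      ∀ φ : F, a * b = σ + η • a + η • b →
        (∀ v ∈ ({a, b, σ} : Set A), σ * v = ((1 - η) * φ - η) • v) →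
        ((∃ e : A, IsIdentOf F (NonUnitalAlgebra.adjoin F ({a, b} : Set A)) e) ↔
            (1 - η) * φ - η ≠ 0) ∧
        ((1 - η) * φ - η ≠ 0 →
          IsIdentOf F (NonUnitalAlgebra.adjoin F ({a, b} : Set A))
            (((1 - η) * φ - η)⁻¹ • σ))) := by
  obtain ⟨φ, hφ⟩ := ha.exists_isProjCoeff b
  have hsum : a * b = axialSigma η a b + η • a + η • b := by rw [axialSigma]; abel
  have hle2 := finrank_adjoin_pair_le_two (F := F) ha.idem hb.idem
  refine ⟨⟨fun h3 => ⟨fun h0 => ?_, axialSigma η a b, axialSigma_mem_adjoin η a b,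
    fun h0 => ?_, φ, hsum, ha.axialSigma_mul_eq_smul hb hη0 hη1 hφ⟩, ?_⟩, ?_⟩
  · have := hle2 (by rw [h0]; exact zero_mem _)
    omega
  · have := hle2 (by
      rw [hsum, h0, zero_add]
      exact add_mem (Submodule.smul_mem _ η (Submodule.subset_span (by simp)))
        (Submodule.smul_mem _ η (Submodule.subset_span (by simp))))
    omega
  · rintro ⟨habne, σ, -, hσ0, ψ, hσ, hσv⟩
    exact finrank_adjoin_pair_eq_three hη0 hη1 ha.idem hb.idem ha.ne_zero hb.ne_zero hab
      habne hσ0 hσ hσv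
  · intro _ σ hσN hσ0 ψ hσ hσv
    have hσz := mul_eq_smul_of_mem_adjoin_pair ha.idem hb.idem hσ hσv
    exact ⟨exists_isIdentOf_iff hσN hσ0 hσz, isIdentOf_inv_smul hσN hσz⟩

/-- For distinct `η`-axes `a, b`, the subalgebra `N_{a,b}` is
3-dimensional precisely when `ab ≠ 0` and there are `0 ≠ σ ∈ N_{a,b}` and
`φ ∈ F` such that, with `π = (1−η)φ − η`, one has `ab = σ + ηa + ηb` and
`σv = πv` for `v ∈ {a, b, σ}`.  Furthermore, when `N_{a,b}` is 3-dimensional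
it has an identity element iff `π ≠ 0`, in which case the identity is
`(1/π)σ`. -/
theorem three_dimensional_two_generated_subalgebras
    {F : Type u} {A : Type v} [Field F] [NonUnitalNonAssocCommRing A]
    [Module F A] [SMulCommClass F A A] [IsScalarTower F A A]
    (hchar : (2 : F) ≠ 0) (η : F) (hη0 : η ≠ 0) (hη1 : η ≠ 1)
    (𝒜 : Set A) (h𝒜 : ∀ a ∈ 𝒜, IsAxis F η a)
    (hgen : NonUnitalAlgebra.adjoin F 𝒜 = ⊤)
    (a b : A) (ha : IsAxis F η a) (hb : IsAxis F η b) (hab : a ≠ b) :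
    (Module.finrank F ↥((NonUnitalAlgebra.adjoin F ({a, b} : Set A)).toSubmodule) = 3 ↔
      (a * b ≠ 0 ∧ ∃ σ ∈ NonUnitalAlgebra.adjoin F ({a, b} : Set A), σ ≠ 0 ∧
        ∃ φ : F, a * b = σ + η • a + η • b ∧
          ∀ v ∈ ({a, b, σ} : Set A), σ * v = ((1 - η) * φ - η) • v)) ∧
    (Module.finrank F ↥((NonUnitalAlgebra.adjoin F ({a, b} : Set A)).toSubmodule) = 3 →
      ∀ σ ∈ NonUnitalAlgebra.adjoin F ({a, b} : Set A), σ ≠ 0 →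
      ∀ φ : F, a * b = σ + η • a + η • b →
        (∀ v ∈ ({a, b, σ} : Set A), σ * v = ((1 - η) * φ - η) • v) →
        ((∃ e : A, IsIdentOf F (NonUnitalAlgebra.adjoin F ({a, b} : Set A)) e) ↔
            (1 - η) * φ - η ≠ 0) ∧
        ((1 - η) * φ - η ≠ 0 →
          IsIdentOf F (NonUnitalAlgebra.adjoin F ({a, b} : Set A))
            (((1 - η) * φ - η)⁻¹ • σ))) :=
  three_dimensional_two_generated_subalgebras_general η hη0 hη1 a b ha hb hab
end

section
/- Let A be a primitive axial algebra of Jordan type η over a field F with char F ≠ 2, generated by a closed set 𝒜 of η-axes with |𝒜| > 1, and suppose the map a ↦ τ_a on 𝒜 is injective. Let a, b ∈ 𝒜 be distinct. Then: (1) if (τ_a τ_b)² = 1 in Aut(A), then ab = 0; (2) if (τ_a τ_b)³ = 1 in Aut(A), then φ_a(b) = η/2. -/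
universe u v

/-!
The Miyamoto involution of an axis is determined by the eigenspace decomposition, so conjugating
`τ_b` by the automorphism `τ_a` gives `τ_{τ_a(b)}`. Hence `(τ_a τ_b)² = 1` forces
`τ_{τ_a(b)} = τ_b` and `(τ_a τ_b)³ = 1` the braid relation `τ_{τ_a(b)} = τ_{τ_b(a)}`; by
injectivity, `τ_a(b) = b`, resp. `τ_a(b) = τ_b(a)`.

In the first case `b = φ a + b₀` with `b₀ ∈ A_0(a)`, and `b² = b` gives `φ² = φ`; `φ = 1` would
put `a` in `A_1(b) = F b`, so `φ = 0` and `ab = 0`. In the second case the identity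
`2 ab = 2 φ_a(b) a + η (b - τ_a(b))` and its mirror image give
`(2 φ_a(b) - η) a = (2 φ_b(a) - η) b`, and distinct nonzero idempotents are linearly independent.
-/

open Function

section Involutions

variable {α : Type*} {f g : α → α}

theorem conj_eq_of_comp_sq_eq_id (hg : Involutive g) (h : (f ∘ g) ∘ (f ∘ g) = id) :
    f ∘ g ∘ f = g :=
  funext fun x => by simpa [hg x] using congrFun h (g x)

theorem braid_of_comp_cube_eq_id (hf : Involutive f) (hg : Involutive g)
    (h : (f ∘ g) ∘ ((f ∘ g) ∘ (f ∘ g)) = id) : f ∘ g ∘ f = g ∘ f ∘ g := by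
  funext x
  have h' : f (g (f (g (f x)))) = g x := by simpa [hg x] using congrFun h (g x)
  simpa [hf (g (f (g (f x)))), hg (f (g (f x)))] using congrArg (g ∘ f) h'

end Involutions

section Algebras

variable {F : Type u} {A : Type v} [Field F] [NonUnitalNonAssocCommRing A] [Module F A]
  {η : F} {a b : A} {ψ ψ' χ σ σ' : A → A}

theorem IsIdempotentElem.eq_zero_of_smul_eq_smul [SMulCommClass F A A] [IsScalarTower F A A]
    (ha : IsIdempotentElem a) (hb : IsIdempotentElem b) (ha0 : a ≠ 0) (hab : a ≠ b) {α β : F}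
    (h : α • a = β • b) : α = 0 := by
  by_contra hα
  set k := α⁻¹ * β
  have hak : a = k • b := by rw [mul_smul, ← h, inv_smul_smul₀ hα]
  have hb0 : b ≠ 0 := by rintro rfl; exact ha0 (by simpa using hak)
  have hk : IsIdempotentElem k := by
    refine smul_left_injective F hb0 ?_
    change (k * k) • b = k • b
    rw [← hak, ← hb.eq, ← smul_mul_smul_comm, ← hak, ha.eq]
  rcases IsIdempotentElem.iff_eq_zero_or_one.mp hk with hk | hk
  · exact ha0 (by rw [hak, hk, zero_smul])
  · exact hab (by rw [hak, hk, one_smul])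

theorem IsAlgAut.map_neg (hψ : IsAlgAut F ψ) (x : A) : ψ (-x) = -ψ x := by
  rw [← neg_one_smul F x, hψ.map_smul, neg_one_smul]

theorem IsAlgAut.comp (hψ : IsAlgAut F ψ) (hχ : IsAlgAut F χ) : IsAlgAut F (ψ ∘ χ) where
  map_add x y := by simp only [comp_apply, hχ.map_add, hψ.map_add]
  map_smul c x := by simp only [comp_apply, hχ.map_smul, hψ.map_smul]
  map_mul x y := by simp only [comp_apply, hχ.map_mul, hψ.map_mul]
  bijective := hψ.bijective.comp hχ.bijective

theorem IsAlgAut.inverse (hψ : IsAlgAut F ψ) (h₁ : LeftInverse ψ' ψ) (h₂ : RightInverse ψ' ψ) :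
    IsAlgAut F ψ' where
  map_add x y := hψ.bijective.injective (by rw [hψ.map_add, h₂, h₂, h₂])
  map_smul c x := hψ.bijective.injective (by rw [hψ.map_smul, h₂, h₂])
  map_mul x y := hψ.bijective.injective (by rw [hψ.map_mul, h₂, h₂, h₂])
  bijective := ⟨h₂.injective, h₁.surjective⟩

variable [SMulCommClass F A A]

theorem mem_eigSp_iff {x : A} {l : F} : x ∈ eigSp F a l ↔ a * x = l • x := Iff.rfl

theorem eq_zero_of_mem_eigSp_of_mem_eigSp {x : A} {l m : F} (hlm : l ≠ m)
    (hl : x ∈ eigSp F a l) (hm : x ∈ eigSp F a m) : x = 0 := by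
  have h : (l - m) • x = 0 := by
    rw [sub_smul, ← mem_eigSp_iff.mp hl, ← mem_eigSp_iff.mp hm, sub_self]
  exact (smul_eq_zero.mp h).resolve_left (sub_ne_zero.mpr hlm)

theorem IsAxis.self_mem_eigSp_one (ha : IsAxis F η a) : a ∈ eigSp F a 1 := by
  rw [mem_eigSp_iff, one_smul]
  exact ha.idem

theorem IsAxis.exists_isProjCoeff_s13 (ha : IsAxis F η a) (x : A) : ∃ c, IsProjCoeff F η a x c := by
  have hx : x ∈ eigSp F a 1 ⊔ eigSp F a 0 ⊔ eigSp F a η := ha.decomp ▸ Submodule.mem_top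
  obtain ⟨y, hy, xe, hxe, rfl⟩ := Submodule.mem_sup.mp hx
  obtain ⟨x1, h1, x0, h0, rfl⟩ := Submodule.mem_sup.mp hy
  rw [ha.prim] at h1
  obtain ⟨c, rfl⟩ := Submodule.mem_span_singleton.mp h1
  exact ⟨c, x0, h0, xe, hxe, rfl⟩

theorem IsAxis.mul_smul_add_add (ha : IsAxis F η a) {c : F} {x0 xe : A}
    (h0 : x0 ∈ eigSp F a 0) (he : xe ∈ eigSp F a η) :
    a * (c • a + x0 + xe) = c • a + η • xe := by
  rw [mul_add, mul_add, mul_smul_comm, ha.idem, ha.f10 a ha.self_mem_eigSp_one x0 h0, add_zero,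
    mem_eigSp_iff.mp he]

theorem IsAlgAut.apply_mem_eigSp_apply_iff (hψ : IsAlgAut F ψ) {b x : A} {l : F} :
    ψ x ∈ eigSp F (ψ b) l ↔ x ∈ eigSp F b l := by
  simp only [mem_eigSp_iff, ← hψ.map_mul, ← hψ.map_smul, hψ.bijective.injective.eq_iff]

theorem IsMiyamoto.isAlgAut (hσ : IsMiyamoto F η a σ) : IsAlgAut F σ :=
  ⟨hσ.map_add, hσ.map_smul, hσ.map_mul, hσ.bijective⟩

theorem IsMiyamoto.apply_add_add (hσ : IsMiyamoto F η a σ) {x1 x0 xe : A}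
    (h1 : x1 ∈ eigSp F a 1) (h0 : x0 ∈ eigSp F a 0) (he : xe ∈ eigSp F a η) :
    σ (x1 + x0 + xe) = x1 + x0 - xe := by
  rw [hσ.map_add, hσ.fixes _ (Submodule.add_mem_sup h1 h0), hσ.negates _ he, sub_eq_add_neg]

theorem IsMiyamoto.unique (hσ : IsMiyamoto F η a σ) (ha : IsAxis F η a)
    (hσ' : IsMiyamoto F η a σ') : σ = σ' := by
  funext x
  obtain ⟨c, x0, h0, xe, he, rfl⟩ := ha.exists_isProjCoeff_s13 x
  have h1 := Submodule.smul_mem _ c ha.self_mem_eigSp_one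
  rw [hσ.apply_add_add h1 h0 he, hσ'.apply_add_add h1 h0 he]

theorem IsMiyamoto.involutive (hσ : IsMiyamoto F η a σ) (ha : IsAxis F η a) : Involutive σ := by
  intro x
  obtain ⟨c, x0, h0, xe, he, rfl⟩ := ha.exists_isProjCoeff_s13 x
  have h1 := Submodule.smul_mem _ c ha.self_mem_eigSp_one
  rw [hσ.apply_add_add h1 h0 he, sub_eq_add_neg,
    hσ.apply_add_add h1 h0 (Submodule.neg_mem _ he), sub_neg_eq_add]

theorem IsMiyamoto.conj (hσ : IsMiyamoto F η b σ) (hψ : IsAlgAut F ψ)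
    (h₁ : LeftInverse ψ' ψ) (h₂ : RightInverse ψ' ψ) :
    IsMiyamoto F η (ψ b) (ψ ∘ σ ∘ ψ') := by
  have hψ' := hψ.inverse h₁ h₂
  have hmem {x : A} {l : F} : x ∈ eigSp F (ψ b) l ↔ ψ' x ∈ eigSp F b l := by
    rw [← hψ.apply_mem_eigSp_apply_iff (x := ψ' x), h₂]
  have hconj := hψ.comp (hσ.isAlgAut.comp hψ')
  refine ⟨fun x hx => ?_, fun x hx => ?_, hconj.map_add, hconj.map_smul, hconj.map_mul,
    hconj.bijective⟩
  · obtain ⟨x1, h1, x0, h0, rfl⟩ := Submodule.mem_sup.mp hx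
    rw [comp_apply, comp_apply, hψ'.map_add,
      hσ.fixes _ (Submodule.add_mem_sup (hmem.mp h1) (hmem.mp h0)), ← hψ'.map_add, h₂]
  · rw [comp_apply, comp_apply, hσ.negates _ (hmem.mp hx), hψ.map_neg, h₂]

theorem IsMiyamoto.eq_zero_of_apply_eq (hσ : IsMiyamoto F η a σ) (ha : IsAxis F η a)
    (hchar : (2 : F) ≠ 0) {c : F} {x0 xe : A} (h0 : x0 ∈ eigSp F a 0) (he : xe ∈ eigSp F a η)
    (hfix : σ (c • a + x0 + xe) = c • a + x0 + xe) : xe = 0 := by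
  rw [hσ.apply_add_add (Submodule.smul_mem _ c ha.self_mem_eigSp_one) h0 he] at hfix
  have h2 : (2 : F) • xe = 0 := by linear_combination (norm := module) -hfix
  exact (smul_eq_zero.mp h2).resolve_left hchar

theorem IsMiyamoto.two_smul_mul_eq (hσ : IsMiyamoto F η a σ) (ha : IsAxis F η a) {u : A} {φ : F}
    (hu : IsProjCoeff F η a u φ) : (2 : F) • (a * u) = (2 * φ) • a + η • (u - σ u) := by
  obtain ⟨u0, h0, ue, he, rfl⟩ := hu
  rw [ha.mul_smul_add_add h0 he,
    hσ.apply_add_add (Submodule.smul_mem _ φ ha.self_mem_eigSp_one) h0 he]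
  module

variable [IsScalarTower F A A]

theorem IsAxis.isIdempotentElem_coeff (ha : IsAxis F η a) {c : F} {x0 : A}
    (h0 : x0 ∈ eigSp F a 0) (hx : IsIdempotentElem (c • a + x0)) : IsIdempotentElem c := by
  have hax0 : a * x0 = 0 := ha.f10 a ha.self_mem_eigSp_one x0 h0
  have hsq : (c * c) • a + x0 * x0 = c • a + x0 := by
    rw [← hx.eq, mul_add, add_mul, add_mul, smul_mul_smul_comm, ha.idem, smul_mul_assoc,
      mul_smul_comm, mul_comm x0 a, hax0, smul_zero, add_zero, zero_add]
  -- `(c² - c) a` lies in `A_1(a)` and, by the fusion rule for `A_0(a)`, also in `A_0(a)`.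
  have h : (c * c - c) • a = 0 := by
    refine eq_zero_of_mem_eigSp_of_mem_eigSp one_ne_zero
      (Submodule.smul_mem _ _ ha.self_mem_eigSp_one) ?_
    rw [show (c * c - c) • a = x0 - x0 * x0 by linear_combination (norm := module) hsq]
    exact Submodule.sub_mem _ h0 (ha.f00 x0 h0 x0 h0)
  exact sub_eq_zero.mp ((smul_eq_zero.mp h).resolve_right ha.ne_zero)

theorem IsAxis.mul_ne_self (hb : IsAxis F η b) (ha : IsIdempotentElem a) (ha0 : a ≠ 0)
    (hab : a ≠ b) : b * a ≠ a := by
  intro h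
  have h1 : a ∈ eigSp F b 1 := by rwa [mem_eigSp_iff, one_smul]
  rw [hb.prim] at h1
  obtain ⟨k, hk⟩ := Submodule.mem_span_singleton.mp h1
  exact one_ne_zero (ha.eq_zero_of_smul_eq_smul hb.idem ha0 hab (by rw [one_smul, hk]))

theorem IsAxis.mul_eq_zero_of_isMiyamoto_apply_eq (ha : IsAxis F η a) (hb : IsAxis F η b)
    (hab : a ≠ b) (hchar : (2 : F) ≠ 0) (hσ : IsMiyamoto F η a σ) (hfix : σ b = b) :
    a * b = 0 := by
  obtain ⟨c, b0, h0, be, he, rfl⟩ := ha.exists_isProjCoeff_s13 b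
  obtain rfl : be = 0 := hσ.eq_zero_of_apply_eq ha hchar h0 he hfix
  have hmul : a * (c • a + b0 + 0) = c • a := by
    rw [ha.mul_smul_add_add h0 he, smul_zero, add_zero]
  rw [add_zero] at hb hab hmul ⊢
  rcases IsIdempotentElem.iff_eq_zero_or_one.mp (ha.isIdempotentElem_coeff h0 hb.idem)
    with rfl | rfl
  · rw [hmul, zero_smul]
  · rw [one_smul] at hmul hb hab
    exact (hb.mul_ne_self ha.idem ha.ne_zero hab (by rwa [mul_comm] at hmul)).elim

theorem IsAxis.isProjCoeff_eq_half (ha : IsAxis F η a) (hb : IsAxis F η b) (hab : a ≠ b)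
    (hchar : (2 : F) ≠ 0) {σa σb : A → A} (hσa : IsMiyamoto F η a σa)
    (hσb : IsMiyamoto F η b σb) (hswap : σa b = σb a) {φ : F} (hφ : IsProjCoeff F η a b φ) :
    φ = η / 2 := by
  obtain ⟨ψ, hψ⟩ := hb.exists_isProjCoeff_s13 a
  have hmul_a := hσa.two_smul_mul_eq ha hφ
  have hmul_b := hσb.two_smul_mul_eq hb hψ
  rw [mul_comm b a, ← hswap] at hmul_b
  have h : (2 * φ - η) • a = (2 * ψ - η) • b := by
    linear_combination (norm := module) hmul_b - hmul_a
  rw [eq_div_iff hchar]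
  linear_combination IsIdempotentElem.eq_zero_of_smul_eq_smul ha.idem hb.idem ha.ne_zero hab h

end Algebras

theorem order_of_product_of_miyamotos_general
    {F : Type u} {A : Type v} [Field F] [NonUnitalNonAssocCommRing A]
    [Module F A] [SMulCommClass F A A] [IsScalarTower F A A]
    (hchar : (2 : F) ≠ 0) (η : F)
    (𝒜 : Set A) (h𝒜 : ∀ a ∈ 𝒜, IsAxis F η a)
    (τ : A → A → A) (hτ : ∀ a ∈ 𝒜, IsMiyamoto F η a (τ a))
    (hclosed : ∀ a ∈ 𝒜, ∀ b ∈ 𝒜, τ b a ∈ 𝒜)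
    (hinj : Set.InjOn τ 𝒜)
    (a : A) (ha : a ∈ 𝒜) (b : A) (hb : b ∈ 𝒜) (hab : a ≠ b) :
    ((τ a ∘ τ b) ∘ (τ a ∘ τ b) = id → a * b = 0) ∧
    ((τ a ∘ τ b) ∘ ((τ a ∘ τ b) ∘ (τ a ∘ τ b)) = id →
      ∀ φ : F, IsProjCoeff F η a b φ → φ = η / 2) := by
  have hinv : ∀ x ∈ 𝒜, Involutive (τ x) := fun x hx => (hτ x hx).involutive (h𝒜 x hx)
  have hconj : ∀ x ∈ 𝒜, ∀ y ∈ 𝒜, τ (τ x y) = τ x ∘ τ y ∘ τ x := fun x hx y hy =>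
    (hτ _ (hclosed y hy x hx)).unique (h𝒜 _ (hclosed y hy x hx))
      ((hτ y hy).conj (hτ x hx).isAlgAut (hinv x hx).leftInverse (hinv x hx).rightInverse)
  refine ⟨fun h2 => ?_, fun h3 φ hφ => ?_⟩
  · have hfix : τ a b = b := hinj (hclosed b hb a ha) hb <| by
      rw [hconj a ha b hb, conj_eq_of_comp_sq_eq_id (hinv b hb) h2]
    exact (h𝒜 a ha).mul_eq_zero_of_isMiyamoto_apply_eq (h𝒜 b hb) hab hchar (hτ a ha) hfix
  · have hswap : τ a b = τ b a := hinj (hclosed b hb a ha) (hclosed a ha b hb) <| by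
      rw [hconj a ha b hb, hconj b hb a ha, braid_of_comp_cube_eq_id (hinv a ha) (hinv b hb) h3]
    exact (h𝒜 a ha).isProjCoeff_eq_half (h𝒜 b hb) hab hchar (hτ a ha) (hτ b hb) hswap hφ

/-- Suppose `A` is generated by a closed set `𝒜` of `η`-axes
with `|𝒜| > 1` and `a ↦ τ_a` is injective on `𝒜`.  For distinct `a, b ∈ 𝒜`:
(1) if `(τ_a τ_b)² = 1` then `ab = 0`; (2) if `(τ_a τ_b)³ = 1` then
`φ_a(b) = η/2`. -/
theorem order_of_product_of_miyamotos
    {F : Type u} {A : Type v} [Field F] [NonUnitalNonAssocCommRing A]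
    [Module F A] [SMulCommClass F A A] [IsScalarTower F A A]
    (hchar : (2 : F) ≠ 0) (η : F) (hη0 : η ≠ 0) (hη1 : η ≠ 1)
    (𝒜 : Set A) (h𝒜 : ∀ a ∈ 𝒜, IsAxis F η a)
    (hgen : NonUnitalAlgebra.adjoin F 𝒜 = ⊤)
    (τ : A → A → A) (hτ : ∀ a ∈ 𝒜, IsMiyamoto F η a (τ a))
    (hclosed : ∀ a ∈ 𝒜, ∀ b ∈ 𝒜, τ b a ∈ 𝒜)
    (hcard : 𝒜.Nontrivial)
    (hinj : Set.InjOn τ 𝒜)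
    (a : A) (ha : a ∈ 𝒜) (b : A) (hb : b ∈ 𝒜) (hab : a ≠ b) :
    ((τ a ∘ τ b) ∘ (τ a ∘ τ b) = id → a * b = 0) ∧
    ((τ a ∘ τ b) ∘ ((τ a ∘ τ b) ∘ (τ a ∘ τ b)) = id →
      ∀ φ : F, IsProjCoeff F η a b φ → φ = η / 2) :=
  order_of_product_of_miyamotos_general hchar η 𝒜 h𝒜 τ hτ hclosed hinj a ha b hb hab
end
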